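/- arXiv:1910.12935 — 3 statements merged into one kernel-verified Lean document; each statement's English description precedes it below -/
import Mathlib

section
/- Let f : Set D → Set D be distributive over union, and define its representation relation R_f ⊆ (Option D) × (Option D) by: (none, none) ∈ R_f; (none, some d) ∈ R_f iff d ∈ f(∅); and (some d₁, some d₂) ∈ R_f iff d₂ ∈ f({d₁}) and d₂ ∉ f(∅). Then for any subset D₀ ⊆ D and any d ∈ D, d ∈ f(D₀) if and only if (none, some d) ∈ R_f or there exists d' ∈ D₀ with (some d', some d) ∈ R_f. -/
def repRel {D : Type*} (f : Set D → Set D) : Option D → Option D → Prop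
  | none, none => True
  | none, some d => d ∈ f ∅
  | some d₁, some d₂ => d₂ ∈ f {d₁} ∧ d₂ ∉ f ∅
  | some _, none => False

theorem Set.Finite.map_eq_map_empty_union_biUnion {α β : Type*} {f : Set α → Set β}
    (hf : ∀ X Y : Set α, f (X ∪ Y) = f X ∪ f Y) {S : Set α} (hS : S.Finite) :
    f S = f ∅ ∪ ⋃ x ∈ S, f {x} := by
  induction S, hS using Set.Finite.induction_on with
  | empty => simp
  | @insert a s _ _ ih =>
    rw [Set.insert_eq, hf, ih, ← Set.insert_eq, Set.biUnion_insert]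
    ac_rfl

theorem stmt_3 {D : Type*} [Finite D] (f : Set D → Set D)
    (hf : ∀ X Y : Set D, f (X ∪ Y) = f X ∪ f Y) (D₀ : Set D) (d : D) :
    d ∈ f D₀ ↔ repRel f none (some d) ∨ ∃ d' ∈ D₀, repRel f (some d') (some d) := by
  rw [(Set.toFinite D₀).map_eq_map_empty_union_biUnion hf]
  simp only [repRel, Set.mem_union, Set.mem_iUnion₂, exists_prop]
  by_cases h : d ∈ f ∅ <;> simp [h]
end

section
/- For distributive functions f, g : Set D → Set D (over union), the relational semantics of R_f ∪ R_g applied to any subset D₀ equals f(D₀) ∪ g(D₀). -/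
def relSem {D : Type*} (R : Option D → Option D → Prop) (D₀ : Set D) : Set D :=
  {d | R none (some d) ∨ ∃ d' ∈ D₀, R (some d') (some d)}

theorem mem_map_iff_of_map_union {D : Type*} {f : Set D → Set D}
    (hf : ∀ X Y : Set D, f (X ∪ Y) = f X ∪ f Y) {s : Set D} (hs : s.Finite) (d : D) :
    d ∈ f s ↔ d ∈ f ∅ ∨ ∃ x ∈ s, d ∈ f {x} := by
  induction s, hs using Set.Finite.induction_on with
  | empty => simp
  | @insert a s _ _ ih =>
    rw [Set.exists_mem_insert, Set.insert_eq, hf, Set.mem_union, ih]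
    tauto

theorem relSem_or {D : Type*} (R S : Option D → Option D → Prop) (s : Set D) :
    relSem (fun x y => R x y ∨ S x y) s = relSem R s ∪ relSem S s := by
  ext d
  simp only [relSem, Set.mem_ofPred_eq, Set.mem_union]
  grind

theorem relSem_repRel {D : Type*} {f : Set D → Set D}
    (hf : ∀ X Y : Set D, f (X ∪ Y) = f X ∪ f Y) {s : Set D} (hs : s.Finite) :
    relSem (repRel f) s = f s := by
  ext d
  rw [mem_map_iff_of_map_union hf hs]
  simp only [relSem, repRel, Set.mem_ofPred_eq]
  -- the side condition `d ∉ f ∅` only removes points already produced by the `none` row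
  by_cases h₀ : d ∈ f ∅ <;> simp [h₀]

theorem stmt_5 {D : Type*} [Finite D] (f g : Set D → Set D)
    (hf : ∀ X Y : Set D, f (X ∪ Y) = f X ∪ f Y)
    (hg : ∀ X Y : Set D, g (X ∪ Y) = g X ∪ g Y) (D₀ : Set D) :
    relSem (fun x y => repRel f x y ∨ repRel g x y) D₀ = f D₀ ∪ g D₀ := by
  rw [relSem_or, relSem_repRel hf D₀.toFinite, relSem_repRel hg D₀.toFinite]
end

section
/- Completeness of the infeasibility detection for a single handler: with the concrete and abstract semantics of the previous context, a word w over {register, emit, invoke, skip} is valid in the concrete state machine (starting from S) if and only if the abstract composed micro-function applied to S is not X. -/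
inductive EState | X | S | R | E
  deriving DecidableEq

instance : Fintype EState :=
  ⟨{.X, .S, .R, .E}, fun x => by cases x <;> simp⟩

def EState.toNat : EState → ℕ
  | .E => 0 | .R => 1 | .S => 2 | .X => 3

instance : LinearOrder EState :=
  LinearOrder.lift' EState.toNat (by decide)

inductive Op | register | emit | invoke | skip
  deriving DecidableEq

/-- Abstract micro-function semantics of a single operation. -/
def astep : EState → Op → EState
  | .X, _ => .X
  | .S, .register => .R
  | .S, .emit => .S
  | .S, .invoke => .X
  | .S, .skip => .S
  | .R, .register => .R
  | .R, .emit => .E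
  | .R, .invoke => .X
  | .R, .skip => .R
  | .E, _ => .E

/-- Abstract run: compose the micro-functions along the word. -/
def arun (l : EState) : List Op → EState
  | [] => l
  | op :: w => arun (astep l op) w

inductive CState | S | R | E
  deriving DecidableEq

/-- Concrete partial transition: `invoke` is undefined from `S` and `R`. -/
def cstep : CState → Op → Option CState
  | .S, .register => some .R
  | .S, .emit => some .S
  | .S, .invoke => none
  | .S, .skip => some .S
  | .R, .register => some .R
  | .R, .emit => some .E
  | .R, .invoke => none
  | .R, .skip => some .R
  | .E, _ => some .E

/-- Concrete run: defined only if every step is defined. -/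
def crun (q : CState) : List Op → Option CState
  | [] => some q
  | op :: w => (cstep q op).bind (fun q' => crun q' w)

/-- Embedding of concrete states into the abstract lattice. -/
def ι : CState → EState
  | .S => .S | .R => .R | .E => .E

/-! The abstract semantics is the concrete one with the failed run encoded as `X`: extending `ι`
by `none ↦ X` intertwines `astep` with `cstep` lifted to `Option`, hence `arun` with `crun`. -/

def ιOption : Option CState → EState
  | none => .X
  | some q => ι q

theorem ιOption_ne_X_iff (o : Option CState) : ιOption o ≠ .X ↔ ∃ q, o = some q := by
  rcases o with _ | ⟨_ | _ | _⟩ <;> simp [ιOption, ι]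

theorem astep_ιOption (o : Option CState) (op : Op) :
    astep (ιOption o) op = ιOption (o.bind (cstep · op)) := by
  rcases o with _ | ⟨_ | _ | _⟩ <;> cases op <;> rfl

theorem arun_ιOption (o : Option CState) (w : List Op) :
    arun (ιOption o) w = ιOption (o.bind (crun · w)) := by
  induction w generalizing o with
  | nil => cases o <;> rfl
  | cons op w ih => simp only [arun, crun, astep_ιOption, ih, Option.bind_assoc]

theorem stmt_17 (w : List Op) :
    (∃ q, crun CState.S w = some q) ↔ arun EState.S w ≠ EState.X := by
  have h : arun EState.S w = ιOption (crun CState.S w) := arun_ιOption (some .S) w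
  rw [h, ιOption_ne_X_iff]
end
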